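/- Let α > -1, α ≠ -6/7. Define on the reference triangle T (vertices v₁=(1,0), v₂=(0,1), v₃=(0,0)) the polynomials ψ_i = c_α φ_i + d_α Σ_{k≠i} φ_k + ϕ_i, with c_α = 3(11α²+20α+12)/((α+6)(7α+6)), d_α = 3(-3α²+8α+12)/((α+6)(7α+6)), and φ_k, ϕ_k the AF3 basis functions (φ_k = λ_k(1-3λ_{k+1}-3λ_{k+2}), ϕ_k = 6λ_{k+1}λ_{k+2}). Then for all i,j ∈ {1,2,3}: ∫₀¹ ψ_i(t v_{j+1}+(1-t)v_{j+2}) dt = δ_ij and ∫₀¹ t^α(1-t)^α ψ_i(t v_j + (1-t)m_j) dt = 0, where m_j is the midpoint of the edge opposite v_j. -/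

import Mathlib

open MvPolynomial

noncomputable section

/-- Vertices of the reference triangle. -/
def vtx : Fin 3 → ℝ × ℝ := ![(1, 0), (0, 1), (0, 0)]

/-- Barycentric coordinates on the reference triangle. -/
def lam : Fin 3 → ℝ × ℝ → ℝ := ![fun q => q.1, fun q => q.2, fun q => 1 - q.1 - q.2]

/-- The AF3 basis functions φᵢ = λᵢ(1 - 3λ_{i+1} - 3λ_{i+2}). -/
def bphi (i : Fin 3) (q : ℝ × ℝ) : ℝ :=
  lam i q * (1 - 3 * lam (i + 1) q - 3 * lam (i + 2) q)

/-- The AF3 basis functions ϕᵢ = 6 λ_{i+1} λ_{i+2}. -/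
def sphi (i : Fin 3) (q : ℝ × ℝ) : ℝ := 6 * lam (i + 1) q * lam (i + 2) q

/-- Evaluation of a bivariate polynomial at a point of ℝ². -/
def evalP (p : MvPolynomial (Fin 2) ℝ) (q : ℝ × ℝ) : ℝ :=
  MvPolynomial.eval ![q.1, q.2] p

/-- Midpoint of the edge opposite vertex `j`. -/
def mid (j : Fin 3) : ℝ × ℝ := (1 / 2 : ℝ) • (vtx (j + 1) + vtx (j + 2))

/-- The basis functions ψᵢ = c_α φᵢ + d_α (φ_{i+1} + φ_{i+2}) + ϕᵢ. -/
def psi (α : ℝ) (i : Fin 3) (q : ℝ × ℝ) : ℝ :=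
  (3 * (11 * α ^ 2 + 20 * α + 12) / ((α + 6) * (7 * α + 6))) * bphi i q +
  (3 * (-3 * α ^ 2 + 8 * α + 12) / ((α + 6) * (7 * α + 6))) *
    (bphi (i + 1) q + bphi (i + 2) q) +
  sphi i q

/-!
Each ψᵢ is quadratic, so on a segment it is a quadratic polynomial in the parameter `t`. Along
the edge opposite `v_j` the barycentric coordinates `(λ_j, λ_{j+1}, λ_{j+2})` are `(0, t, 1 - t)`,
along the median from `v_j` they are `(t, (1 - t)/2, (1 - t)/2)`, and by cyclic symmetry only the
position of `i` relative to `j` matters. The edge integrals are then elementary, for any `c`, `d`.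
On the median, a quadratic `A t² + B t + C` times the Jacobi weight `t^α (1 - t)^α` is the
derivative of `t^(α+1) (1 - t)^(α+1) (p + q t)` (which vanishes at both ends) exactly when
`(α + 2) A + (2α + 3) (B + 2C) = 0`; `c_α` and `d_α` solve the two linear equations this imposes.
-/

open MeasureTheory intervalIntegral Set

theorem integral_quadratic (a b c : ℝ) :
    ∫ t in (0:ℝ)..1, (a * t ^ 2 + b * t + c) = a / 3 + b / 2 + c := by
  rw [intervalIntegral.integral_add, intervalIntegral.integral_add,
    intervalIntegral.integral_const_mul, intervalIntegral.integral_const_mul, integral_pow,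
    integral_id, intervalIntegral.integral_const]
  · norm_num; ring
  all_goals exact Continuous.intervalIntegrable (by fun_prop) _ _

theorem intervalIntegrable_rpow_mul_one_sub_rpow {a b : ℝ} (ha : -1 < a) (hb : -1 < b) :
    IntervalIntegrable (fun t : ℝ => t ^ a * (1 - t) ^ b) volume 0 1 := by
  have hleft : IntervalIntegrable (fun t : ℝ => t ^ a * (1 - t) ^ b) volume 0 (1 / 2) := by
    refine (intervalIntegrable_rpow' ha).mul_continuousOn ?_
    rw [uIcc_of_le (by norm_num)]
    exact (continuousOn_const.sub continuousOn_id).rpow_const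
      fun t ht => Or.inl (show (1:ℝ) - t ≠ 0 by linarith [ht.2])
  have hright : IntervalIntegrable (fun t : ℝ => t ^ a * (1 - t) ^ b) volume (1 / 2) 1 := by
    have h := (intervalIntegrable_rpow' hb (a := 1 / 2) (b := 0)).comp_sub_left 1
    norm_num at h
    refine h.continuousOn_mul ?_
    rw [uIcc_of_le (by norm_num)]
    exact continuousOn_id.rpow_const fun t ht => Or.inl (show t ≠ 0 by linarith [ht.1])
  exact hleft.trans hright

theorem integral_rpow_mul_one_sub_rpow_mul_linear {a b : ℝ} (ha : -1 < a) (hb : -1 < b)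
    (p q : ℝ) :
    ∫ t in (0:ℝ)..1, t ^ a * (1 - t) ^ b *
      ((a + 1) * (1 - t) * (p + q * t) - (b + 1) * t * (p + q * t) + q * t * (1 - t)) = 0 := by
  have ha' : 0 < a + 1 := by linarith
  have hb' : 0 < b + 1 := by linarith
  let F : ℝ → ℝ := fun t => t ^ (a + 1) * (1 - t) ^ (b + 1) * (p + q * t)
  have hF : ∀ t ∈ Ioo (0:ℝ) 1, HasDerivAt F (t ^ a * (1 - t) ^ b *
      ((a + 1) * (1 - t) * (p + q * t) - (b + 1) * t * (p + q * t) + q * t * (1 - t))) t := by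
    rintro t ⟨ht0, ht1⟩
    have h1t : 1 - t ≠ 0 := by linarith
    have hpow := ((Real.hasDerivAt_rpow_const (p := a + 1) (Or.inl ht0.ne')).mul
      (((hasDerivAt_id t).const_sub 1).rpow_const (p := b + 1) (Or.inl h1t))).mul
      (((hasDerivAt_id t).const_mul q).const_add p)
    refine hpow.congr_deriv ?_
    simp only [add_sub_cancel_right, id, Pi.mul_apply]
    rw [Real.rpow_add_one ht0.ne', Real.rpow_add_one h1t]
    ring
  have hcont : Continuous F := by fun_prop (disch := positivity)
  rw [integral_eq_sub_of_hasDerivAt_of_le zero_le_one hcont.continuousOn hF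
    ((intervalIntegrable_rpow_mul_one_sub_rpow ha hb).mul_continuousOn
      (Continuous.continuousOn (by fun_prop)))]
  simp [F, Real.zero_rpow ha'.ne', Real.zero_rpow hb'.ne']

theorem integral_rpow_mul_one_sub_rpow_mul_quadratic {α A B C : ℝ} (hα : -1 < α)
    (h : (α + 2) * A + (2 * α + 3) * (B + 2 * C) = 0) :
    ∫ t in (0:ℝ)..1, t ^ α * (1 - t) ^ α * (A * t ^ 2 + B * t + C) = 0 := by
  have h2 : 2 * α + 3 ≠ 0 := by linarith
  obtain ⟨p, hp⟩ : ∃ p, (α + 1) * p = C := ⟨C / (α + 1), mul_div_cancel₀ C (by linarith)⟩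
  obtain ⟨q, hq⟩ : ∃ q, (2 * α + 3) * q = -A := ⟨-A / (2 * α + 3), mul_div_cancel₀ _ h2⟩
  convert integral_rpow_mul_one_sub_rpow_mul_linear hα hα p q using 4 with t
  refine mul_left_cancel₀ h2 ?_
  linear_combination
    t * h - (2 * α + 3) * (1 - 2 * t) * hp + ((2 * α + 3) * t ^ 2 - (α + 2) * t) * hq

def bphiBary (x y z : ℝ) : ℝ := x * (1 - 3 * y - 3 * z)

def psiBary (c d x y z : ℝ) : ℝ :=
  c * bphiBary x y z + d * (bphiBary y z x + bphiBary z x y) + 6 * y * z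

def psiC (α : ℝ) : ℝ := 3 * (11 * α ^ 2 + 20 * α + 12) / ((α + 6) * (7 * α + 6))

def psiD (α : ℝ) : ℝ := 3 * (-3 * α ^ 2 + 8 * α + 12) / ((α + 6) * (7 * α + 6))

theorem psi_eq_psiBary (α : ℝ) (i : Fin 3) (q : ℝ × ℝ) :
    psi α i q = psiBary (psiC α) (psiD α) (lam i q) (lam (i + 1) q) (lam (i + 2) q) := by
  fin_cases i <;> rfl

theorem lam_add_edge (j k : Fin 3) (t : ℝ) :
    lam (j + k) (t • vtx (j + 1) + (1 - t) • vtx (j + 2)) = ![0, t, 1 - t] k := by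
  fin_cases j <;> fin_cases k <;> simp [lam, vtx]

theorem lam_add_median (j k : Fin 3) (t : ℝ) :
    lam (j + k) (t • vtx j + (1 - t) • mid j) = ![t, (1 - t) / 2, (1 - t) / 2] k := by
  fin_cases j <;> fin_cases k <;> simp [lam, vtx, mid] <;> ring

theorem integral_psiBary_edge_opposite (c d : ℝ) :
    ∫ t in (0:ℝ)..1, psiBary c d 0 t (1 - t) = 1 := by
  have h (t : ℝ) : psiBary c d 0 t (1 - t) = (6 * d - 6) * t ^ 2 + (6 - 6 * d) * t + d := by
    simp only [psiBary, bphiBary]; ring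
  simp only [h, integral_quadratic]
  ring

theorem integral_psiBary_edge_next (c d : ℝ) :
    ∫ t in (0:ℝ)..1, psiBary c d t (1 - t) 0 = 0 := by
  have h (t : ℝ) : psiBary c d t (1 - t) 0 =
      (3 * c + 3 * d) * t ^ 2 + (-2 * c - 4 * d) * t + d := by
    simp only [psiBary, bphiBary]; ring
  simp only [h, integral_quadratic]
  ring

theorem integral_psiBary_edge_prev (c d : ℝ) :
    ∫ t in (0:ℝ)..1, psiBary c d (1 - t) 0 t = 0 := by
  have h (t : ℝ) : psiBary c d (1 - t) 0 t =
      (3 * c + 3 * d) * t ^ 2 + (-4 * c - 2 * d) * t + c := by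
    simp only [psiBary, bphiBary]; ring
  simp only [h, integral_quadratic]
  ring

theorem integral_jacobi_psiBary_vertex {α : ℝ} (hα : -1 < α) (hα7 : α ≠ -6 / 7) :
    ∫ t in (0:ℝ)..1, t ^ α * (1 - t) ^ α *
      psiBary (psiC α) (psiD α) t ((1 - t) / 2) ((1 - t) / 2) = 0 := by
  have h (t : ℝ) : psiBary (psiC α) (psiD α) t ((1 - t) / 2) ((1 - t) / 2) =
      (3 * psiC α + 3 * psiD α / 2 + 3 / 2) * t ^ 2 + (-2 * psiC α - psiD α - 3) * t +
        (3 - psiD α) / 2 := by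
    simp only [psiBary, bphiBary]; ring
  simp only [h]
  refine integral_rpow_mul_one_sub_rpow_mul_quadratic hα ?_
  have h6 : α + 6 ≠ 0 := by linarith
  have h7 : α * 7 + 6 ≠ 0 := fun h => hα7 (by linarith)
  simp only [psiC, psiD]
  field_simp
  ring

theorem integral_jacobi_psiBary_side {α : ℝ} (hα : -1 < α) (hα7 : α ≠ -6 / 7) :
    ∫ t in (0:ℝ)..1, t ^ α * (1 - t) ^ α *
      psiBary (psiC α) (psiD α) ((1 - t) / 2) ((1 - t) / 2) t = 0 := by
  have h (t : ℝ) : psiBary (psiC α) (psiD α) ((1 - t) / 2) ((1 - t) / 2) t =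
      (3 * (psiC α + psiD α) / 4 + 3 * psiD α - 3) * t ^ 2 +
        (-(psiC α + psiD α) / 2 - 2 * psiD α + 3) * t - (psiC α + psiD α) / 4 := by
    simp only [psiBary, bphiBary]; ring
  simp only [h]
  refine integral_rpow_mul_one_sub_rpow_mul_quadratic hα ?_
  have h6 : α + 6 ≠ 0 := by linarith
  have h7 : α * 7 + 6 ≠ 0 := fun h => hα7 (by linarith)
  simp only [psiC, psiD]
  field_simp
  ring

theorem psiBary_swap (c d x y z : ℝ) : psiBary c d x z y = psiBary c d x y z := by
  simp only [psiBary, bphiBary]; ring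

theorem psi_duality (α : ℝ) (hα : -1 < α) (hα7 : α ≠ -6 / 7) (i j : Fin 3) :
    (∫ t in (0:ℝ)..1, psi α i (t • vtx (j + 1) + (1 - t) • vtx (j + 2))) =
      (if i = j then 1 else 0) ∧
    (∫ t in (0:ℝ)..1, t ^ α * (1 - t) ^ α * psi α i (t • vtx j + (1 - t) • mid j)) = 0 := by
  obtain ⟨k, rfl⟩ : ∃ k, i = j + k := ⟨i - j, (add_sub_cancel j i).symm⟩
  simp only [psi_eq_psiBary, add_assoc, lam_add_edge, lam_add_median]
  fin_cases k <;> simp only [Fin.zero_eta, Fin.mk_one,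
    Fin.reduceFinMk, Fin.isValue, Fin.reduceAdd, Fin.reduceEq, Matrix.cons_val_zero,
    Matrix.cons_val_one, Matrix.cons_val, zero_add, add_zero, add_eq_left, one_ne_zero, ↓reduceIte]
  · exact ⟨integral_psiBary_edge_opposite _ _, integral_jacobi_psiBary_vertex hα hα7⟩
  · exact ⟨integral_psiBary_edge_next _ _, integral_jacobi_psiBary_side hα hα7⟩
  · exact ⟨integral_psiBary_edge_prev _ _, by
      simpa only [psiBary_swap] using integral_jacobi_psiBary_side hα hα7⟩

end
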